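/- arXiv:2507.09829 — 4 statements merged into one kernel-verified Lean document; each statement's English description precedes it below -/
import Mathlib

section
/- Every superfiguration admits a V-shaped frame; that is, if S is a linear space in which every point lies on at least 3 lines of size at least 3 and every line of size at least 3 contains at least 3 points, then there exist 5 distinct points p1, p2, p3, p4, p5 of S such that p1, p2, p3 are collinear, p1, p4, p5 are collinear, and no line of S contains 3 of the points p2, p3, p4, p5. -/
/-- A set has at least three (distinct) elements. -/
def HasThree {α : Type*} (s : Set α) : Prop :=
  ∃ a b c, a ∈ s ∧ b ∈ s ∧ c ∈ s ∧ a ≠ b ∧ a ≠ c ∧ b ≠ c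

/-- A linear space: a nonempty set of points together with a set of lines such that
any two distinct points lie on exactly one line and every line has at least two points. -/
structure LinearSpace (P : Type*) where
  nonempty : Nonempty P
  lines : Set (Set P)
  unique_line : ∀ p q : P, p ≠ q → ∃! ℓ, ℓ ∈ lines ∧ p ∈ ℓ ∧ q ∈ ℓ
  two_points : ∀ ℓ ∈ lines, ∃ a b, a ∈ ℓ ∧ b ∈ ℓ ∧ a ≠ b

/- Through any point `p` pass two distinct full lines, and they meet only in `p`. Two further
points on each of them form a frame: a line through three of these four contains two points of
one of the two lines, hence equals it, yet also contains a point of the other line. -/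

theorem HasThree.exists_pair_ne {α : Type*} {s : Set α} (h : HasThree s) (p : α) :
    ∃ x y, x ∈ s ∧ y ∈ s ∧ x ≠ y ∧ x ≠ p ∧ y ≠ p := by
  obtain ⟨a, b, c, ha, hb, hc, hab, hac, hbc⟩ := h
  by_cases hap : a = p
  · subst hap
    exact ⟨b, c, hb, hc, hbc, hab.symm, hac.symm⟩
  by_cases hbp : b = p
  · subst hbp
    exact ⟨a, c, ha, hc, hac, hab, hbc.symm⟩
  exact ⟨a, b, ha, hb, hab, hap, hbp⟩

theorem Set.pair_subset_of_three_mem_insert {α : Type*} {s : Set α} {w x y z a b c : α}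
    (ha : a ∈ ({w, x, y, z} : Set α)) (hb : b ∈ ({w, x, y, z} : Set α))
    (hc : c ∈ ({w, x, y, z} : Set α)) (hab : a ≠ b) (hac : a ≠ c) (hbc : b ≠ c)
    (has : a ∈ s) (hbs : b ∈ s) (hcs : c ∈ s) :
    (w ∈ s ∧ x ∈ s ∧ (y ∈ s ∨ z ∈ s)) ∨ (y ∈ s ∧ z ∈ s ∧ (w ∈ s ∨ x ∈ s)) := by
  simp only [Set.mem_insert_iff, Set.mem_singleton_iff] at ha hb hc
  rcases ha with rfl | rfl | rfl | rfl <;> rcases hb with rfl | rfl | rfl | rfl <;>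
    rcases hc with rfl | rfl | rfl | rfl <;> tauto

namespace LinearSpace

variable {P : Type*} (S : LinearSpace P)

theorem eq_of_mem_of_mem {ℓ m : Set P} {x y : P} (hℓ : ℓ ∈ S.lines) (hm : m ∈ S.lines)
    (hxy : x ≠ y) (hxℓ : x ∈ ℓ) (hyℓ : y ∈ ℓ) (hxm : x ∈ m) (hym : y ∈ m) : ℓ = m :=
  (S.unique_line x y hxy).unique ⟨hℓ, hxℓ, hyℓ⟩ ⟨hm, hxm, hym⟩

theorem eq_of_mem_inter_of_ne {ℓ m : Set P} {x p : P} (hℓ : ℓ ∈ S.lines) (hm : m ∈ S.lines)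
    (hne : ℓ ≠ m) (hxℓ : x ∈ ℓ) (hxm : x ∈ m) (hpℓ : p ∈ ℓ) (hpm : p ∈ m) : x = p := by
  by_contra hxp
  exact hne (S.eq_of_mem_of_mem hℓ hm hxp hxℓ hpℓ hxm hpm)

def IsVFrame (p1 p2 p3 p4 p5 : P) : Prop :=
  Function.Injective (![p1, p2, p3, p4, p5] : Fin 5 → P) ∧
    (∃ ℓ ∈ S.lines, p1 ∈ ℓ ∧ p2 ∈ ℓ ∧ p3 ∈ ℓ) ∧
    (∃ ℓ ∈ S.lines, p1 ∈ ℓ ∧ p4 ∈ ℓ ∧ p5 ∈ ℓ) ∧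
    ∀ ℓ ∈ S.lines, ∀ a b c : P,
      a ∈ ({p2, p3, p4, p5} : Set P) → b ∈ ({p2, p3, p4, p5} : Set P) →
      c ∈ ({p2, p3, p4, p5} : Set P) → a ≠ b → a ≠ c → b ≠ c →
      ¬(a ∈ ℓ ∧ b ∈ ℓ ∧ c ∈ ℓ)

theorem exists_isVFrame_of_mem_of_mem {p : P} {ℓ₁ ℓ₂ : Set P} (hℓ₁ : ℓ₁ ∈ S.lines)
    (hℓ₂ : ℓ₂ ∈ S.lines) (hne : ℓ₁ ≠ ℓ₂) (hp₁ : p ∈ ℓ₁) (hp₂ : p ∈ ℓ₂)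
    (h₁ : HasThree ℓ₁) (h₂ : HasThree ℓ₂) :
    ∃ p2 p3 p4 p5, S.IsVFrame p p2 p3 p4 p5 := by
  obtain ⟨p2, p3, hp2, hp3, h23, h2p, h3p⟩ := h₁.exists_pair_ne p
  obtain ⟨p4, p5, hp4, hp5, h45, h4p, h5p⟩ := h₂.exists_pair_ne p
  have vertex : ∀ x, x ∈ ℓ₁ → x ∈ ℓ₂ → x = p := fun x hx₁ hx₂ =>
    S.eq_of_mem_inter_of_ne hℓ₁ hℓ₂ hne hx₁ hx₂ hp₁ hp₂
  have hn2 : p2 ∉ ℓ₂ := fun h => h2p (vertex p2 hp2 h)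
  have hn3 : p3 ∉ ℓ₂ := fun h => h3p (vertex p3 hp3 h)
  have hn4 : p4 ∉ ℓ₁ := fun h => h4p (vertex p4 h hp4)
  have hn5 : p5 ∉ ℓ₁ := fun h => h5p (vertex p5 h hp5)
  refine ⟨p2, p3, p4, p5, ?_, ⟨ℓ₁, hℓ₁, hp₁, hp2, hp3⟩, ⟨ℓ₂, hℓ₂, hp₂, hp4, hp5⟩, ?_⟩
  · have : p2 ≠ p4 := fun h => hn2 (h ▸ hp4)
    have : p2 ≠ p5 := fun h => hn2 (h ▸ hp5)
    have : p3 ≠ p4 := fun h => hn3 (h ▸ hp4)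
    have : p3 ≠ p5 := fun h => hn3 (h ▸ hp5)
    intro i j h
    fin_cases i <;> fin_cases j <;> simp_all [eq_comm]
  · rintro m hm a b c ha hb hc hab hac hbc ⟨ham, hbm, hcm⟩
    rcases Set.pair_subset_of_three_mem_insert ha hb hc hab hac hbc ham hbm hcm with
      ⟨h2, h3, h4 | h5⟩ | ⟨h4, h5, h2 | h3⟩
    · exact hn4 (S.eq_of_mem_of_mem hm hℓ₁ h23 h2 h3 hp2 hp3 ▸ h4)
    · exact hn5 (S.eq_of_mem_of_mem hm hℓ₁ h23 h2 h3 hp2 hp3 ▸ h5)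
    · exact hn2 (S.eq_of_mem_of_mem hm hℓ₂ h45 h4 h5 hp4 hp5 ▸ h2)
    · exact hn3 (S.eq_of_mem_of_mem hm hℓ₂ h45 h4 h5 hp4 hp5 ▸ h3)

end LinearSpace

theorem superfiguration_has_V_frame_general {P : Type*} (S : LinearSpace P)
    (hpt : ∀ p : P, HasThree {ℓ | ℓ ∈ S.lines ∧ p ∈ ℓ ∧ HasThree ℓ}) :
    ∃ p1 p2 p3 p4 p5 : P,
      Function.Injective (![p1, p2, p3, p4, p5] : Fin 5 → P) ∧
      (∃ ℓ ∈ S.lines, p1 ∈ ℓ ∧ p2 ∈ ℓ ∧ p3 ∈ ℓ) ∧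
      (∃ ℓ ∈ S.lines, p1 ∈ ℓ ∧ p4 ∈ ℓ ∧ p5 ∈ ℓ) ∧
      ∀ ℓ ∈ S.lines, ∀ a b c : P,
        a ∈ ({p2, p3, p4, p5} : Set P) → b ∈ ({p2, p3, p4, p5} : Set P) →
        c ∈ ({p2, p3, p4, p5} : Set P) → a ≠ b → a ≠ c → b ≠ c →
        ¬(a ∈ ℓ ∧ b ∈ ℓ ∧ c ∈ ℓ) := by
  obtain ⟨p⟩ := S.nonempty
  obtain ⟨ℓ₁, ℓ₂, -, ⟨hℓ₁, hp₁, h₁⟩, ⟨hℓ₂, hp₂, h₂⟩, -, hne, -, -⟩ := hpt p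
  exact ⟨p, S.exists_isVFrame_of_mem_of_mem hℓ₁ hℓ₂ hne hp₁ hp₂ h₁ h₂⟩

/-- Every superfiguration admits a V-shaped frame. -/
theorem superfiguration_has_V_frame {P : Type*} (S : LinearSpace P)
    (hpt : ∀ p : P, HasThree {ℓ | ℓ ∈ S.lines ∧ p ∈ ℓ ∧ HasThree ℓ})
    (hln : ∀ ℓ ∈ S.lines, HasThree ℓ → HasThree ℓ) :
    ∃ p1 p2 p3 p4 p5 : P,
      Function.Injective (![p1, p2, p3, p4, p5] : Fin 5 → P) ∧
      (∃ ℓ ∈ S.lines, p1 ∈ ℓ ∧ p2 ∈ ℓ ∧ p3 ∈ ℓ) ∧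
      (∃ ℓ ∈ S.lines, p1 ∈ ℓ ∧ p4 ∈ ℓ ∧ p5 ∈ ℓ) ∧
      ∀ ℓ ∈ S.lines, ∀ a b c : P,
        a ∈ ({p2, p3, p4, p5} : Set P) → b ∈ ({p2, p3, p4, p5} : Set P) →
        c ∈ ({p2, p3, p4, p5} : Set P) → a ≠ b → a ≠ c → b ≠ c →
        ¬(a ∈ ℓ ∧ b ∈ ℓ ∧ c ∈ ℓ) :=
  superfiguration_has_V_frame_general S hpt
end

section
/- A boolean n-function f (a function from subsets of {1,...,n} to {0,1}) is the collinearity indicator function of some linear space on {1,...,n} if and only if: (1) if f(I) = 1 and J ⊆ I then f(J) = 1; (2) if #I ≤ 2 then f(I) = 1; (3) if f(I) = f(J) = 1 and #(I ∩ J) ≥ 2 then f(I ∪ J) = 1. Moreover, the linear space realizing f is unique. -/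
/-- A linear space on `Fin n`, given by its set of lines (each a finite set of points):
any two distinct points lie on exactly one line, and each line has at least two points. -/
def IsLinSpace {n : ℕ} (L : Set (Finset (Fin n))) : Prop :=
  (∀ p q : Fin n, p ≠ q → ∃! ℓ, ℓ ∈ L ∧ p ∈ ℓ ∧ q ∈ ℓ) ∧
  (∀ ℓ ∈ L, 2 ≤ ℓ.card)

/-- A subset is collinear in the linear space `L` if it has at most one point or is
contained in some line. -/
def IsCollin {n : ℕ} (L : Set (Finset (Fin n))) (I : Finset (Fin n)) : Prop :=
  I.card ≤ 1 ∨ ∃ ℓ ∈ L, I ⊆ ℓ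

/-- The axioms characterizing linear space functions among boolean n-functions. -/
def IsLSF {n : ℕ} (f : Finset (Fin n) → Prop) : Prop :=
  (∀ I J : Finset (Fin n), f I → J ⊆ I → f J) ∧
  (∀ I : Finset (Fin n), I.card ≤ 2 → f I) ∧
  (∀ I J : Finset (Fin n), f I → f J → 2 ≤ (I ∩ J).card → f (I ∪ J))

/-- The maximal `f`-sets of cardinality at least 2. -/
def MaxSets {n : ℕ} (f : Finset (Fin n) → Prop) : Set (Finset (Fin n)) :=
  {ℓ | f ℓ ∧ 2 ≤ ℓ.card ∧ ∀ x, f (insert x ℓ) → x ∈ ℓ}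

lemma exists_max_ext {n : ℕ} {f : Finset (Fin n) → Prop} (hf : IsLSF f)
    {I : Finset (Fin n)} (hI : f I) :
    ∃ ℓ, I ⊆ ℓ ∧ f ℓ ∧ ∀ x, f (insert x ℓ) → x ∈ ℓ := by
  obtain ⟨m, ⟨hmf, hIm⟩, hmax⟩ :=
    Set.Finite.exists_maximalFor Finset.card {J : Finset (Fin n) | f J ∧ I ⊆ J}
      (Set.toFinite _) ⟨I, hI, Finset.Subset.refl I⟩
  refine ⟨m, hIm, hmf, fun x hx => ?_⟩
  by_contra hxm
  have h1 : (insert x m).card = m.card + 1 := Finset.card_insert_of_notMem hxm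
  have := hmax (j := insert x m) ⟨hx, hIm.trans (Finset.subset_insert x m)⟩ (by omega)
  omega

lemma maxsets_isLinSpace {n : ℕ} {f : Finset (Fin n) → Prop} (hf : IsLSF f) :
    IsLinSpace (MaxSets f) ∧ ∀ I, f I ↔ IsCollin (MaxSets f) I := by
  obtain ⟨h1, h2, h3⟩ := hf
  -- key: any f-set of card ≥ 2 is contained in a member of MaxSets f
  have key : ∀ I : Finset (Fin n), f I → 2 ≤ I.card →
      ∃ ℓ ∈ MaxSets f, I ⊆ ℓ := by
    intro I hI hcard
    obtain ⟨ℓ, hIℓ, hℓf, hℓmax⟩ := exists_max_ext ⟨h1, h2, h3⟩ hI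
    exact ⟨ℓ, ⟨hℓf, hcard.trans (Finset.card_le_card hIℓ), hℓmax⟩, hIℓ⟩
  -- uniqueness: two members of MaxSets f sharing two points are equal
  have uniq : ∀ ℓ ℓ', ℓ ∈ MaxSets f → ℓ' ∈ MaxSets f →
      2 ≤ (ℓ ∩ ℓ').card → ℓ = ℓ' := by
    intro ℓ ℓ' ⟨hℓf, _, hℓmax⟩ ⟨hℓ'f, _, hℓ'max⟩ hcard
    have hu : f (ℓ ∪ ℓ') := h3 ℓ ℓ' hℓf hℓ'f hcard
    apply Finset.Subset.antisymm
    · intro x hx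
      exact hℓ'max x (h1 _ _ hu (by
        intro y hy
        rcases Finset.mem_insert.mp hy with h | h
        · exact Finset.mem_union_left _ (h ▸ hx)
        · exact Finset.mem_union_right _ h))
    · intro x hx
      exact hℓmax x (h1 _ _ hu (by
        intro y hy
        rcases Finset.mem_insert.mp hy with h | h
        · exact Finset.mem_union_right _ (h ▸ hx)
        · exact Finset.mem_union_left _ h))
  constructor
  · constructor
    · intro p q hpq
      have hpq2 : ({p, q} : Finset (Fin n)).card = 2 := Finset.card_pair hpq
      obtain ⟨ℓ, hℓ, hsub⟩ := key {p, q} (h2 _ (le_of_eq hpq2)) (le_of_eq hpq2.symm)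
      refine ⟨ℓ, ⟨hℓ, hsub (by simp), hsub (by simp)⟩, ?_⟩
      rintro ℓ' ⟨hℓ', hp', hq'⟩
      refine uniq ℓ' ℓ hℓ' hℓ ?_
      have : ({p, q} : Finset (Fin n)) ⊆ ℓ' ∩ ℓ := by
        intro y hy
        rcases Finset.mem_insert.mp hy with h | h
        · subst h; exact Finset.mem_inter.mpr ⟨hp', hsub (by simp)⟩
        · simp only [Finset.mem_singleton] at h; subst h
          exact Finset.mem_inter.mpr ⟨hq', hsub (by simp)⟩
      calc 2 = ({p, q} : Finset (Fin n)).card := hpq2.symm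
        _ ≤ _ := Finset.card_le_card this
    · exact fun ℓ hℓ => hℓ.2.1
  · intro I
    constructor
    · intro hI
      rcases le_or_gt I.card 1 with h | h
      · exact Or.inl h
      · obtain ⟨ℓ, hℓ, hsub⟩ := key I hI h
        exact Or.inr ⟨ℓ, hℓ, hsub⟩
    · rintro (h | ⟨ℓ, hℓ, hsub⟩)
      · exact h2 I (h.trans one_le_two)
      · exact h1 ℓ I hℓ.1 hsub

lemma lines_eq_maxsets {n : ℕ} {f : Finset (Fin n) → Prop} {L : Set (Finset (Fin n))}
    (hL : IsLinSpace L) (hfL : ∀ I, f I ↔ IsCollin L I) : L = MaxSets f := by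
  obtain ⟨huniq, hcard⟩ := hL
  -- lines are f-sets
  have hlf : ∀ ℓ ∈ L, f ℓ := fun ℓ hℓ =>
    (hfL ℓ).mpr (Or.inr ⟨ℓ, hℓ, Finset.Subset.refl ℓ⟩)
  -- two distinct points in a line determine it
  have hdet : ∀ ℓ ∈ L, ∀ m ∈ L, ∀ p q : Fin n, p ≠ q →
      p ∈ ℓ → q ∈ ℓ → p ∈ m → q ∈ m → ℓ = m := by
    intro ℓ hℓ m hm p q hpq hpℓ hqℓ hpm hqm
    obtain ⟨u, _, hu⟩ := huniq p q hpq
    rw [hu ℓ ⟨hℓ, hpℓ, hqℓ⟩, hu m ⟨hm, hpm, hqm⟩]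
  ext ℓ
  constructor
  · intro hℓ
    obtain ⟨p, hp, q, hq, hpq⟩ := Finset.one_lt_card.mp (hcard ℓ hℓ)
    refine ⟨hlf ℓ hℓ, hcard ℓ hℓ, fun x hx => ?_⟩
    rcases (hfL _).mp hx with h | ⟨m, hm, hsub⟩
    · have : 2 ≤ (insert x ℓ).card :=
        (hcard ℓ hℓ).trans (Finset.card_le_card (Finset.subset_insert x ℓ))
      omega
    · have : ℓ = m := hdet ℓ hℓ m hm p q hpq hp hq
        (hsub (Finset.mem_insert_of_mem hp)) (hsub (Finset.mem_insert_of_mem hq))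
      exact this ▸ hsub (Finset.mem_insert_self x ℓ)
  · rintro ⟨hℓf, hℓ2, hℓmax⟩
    rcases (hfL ℓ).mp hℓf with h | ⟨m, hm, hsub⟩
    · omega
    · have : m ⊆ ℓ := by
        intro x hx
        exact hℓmax x ((hfL _).mpr (Or.inr ⟨m, hm, by
          intro y hy
          rcases Finset.mem_insert.mp hy with h | h
          · exact h ▸ hx
          · exact hsub h⟩))
      have : ℓ = m := Finset.Subset.antisymm hsub this
      exact this ▸ hm

/-- A boolean n-function is the collinearity indicator of a (unique) linear space
if and only if it satisfies the three linear space function axioms. -/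
theorem lsf_characterization {n : ℕ} (f : Finset (Fin n) → Prop) :
    ((∃ L : Set (Finset (Fin n)), IsLinSpace L ∧ ∀ I, f I ↔ IsCollin L I) ↔ IsLSF f) ∧
    (∀ L L' : Set (Finset (Fin n)), IsLinSpace L → IsLinSpace L' →
      (∀ I, f I ↔ IsCollin L I) → (∀ I, f I ↔ IsCollin L' I) → L = L') := by
  constructor
  · constructor
    · rintro ⟨L, ⟨huniq, hcard⟩, hfL⟩
      refine ⟨?_, ?_, ?_⟩
      · intro I J hI hJI
        rcases (hfL I).mp hI with h | ⟨ℓ, hℓ, hsub⟩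
        · exact (hfL J).mpr (Or.inl ((Finset.card_le_card hJI).trans h))
        · exact (hfL J).mpr (Or.inr ⟨ℓ, hℓ, hJI.trans hsub⟩)
      · intro I hI
        rcases le_or_gt I.card 1 with h | h
        · exact (hfL I).mpr (Or.inl h)
        · have h2 : I.card = 2 := le_antisymm hI h
          obtain ⟨p, q, hpq, rfl⟩ := Finset.card_eq_two.mp h2
          obtain ⟨ℓ, ⟨hℓ, hp, hq⟩, _⟩ := huniq p q hpq
          refine (hfL _).mpr (Or.inr ⟨ℓ, hℓ, ?_⟩)
          intro y hy
          rcases Finset.mem_insert.mp hy with h | h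
          · exact h ▸ hp
          · simp only [Finset.mem_singleton] at h; exact h ▸ hq
      · intro I J hI hJ hIJ
        obtain ⟨p, hp, q, hq, hpq⟩ := Finset.one_lt_card.mp hIJ
        have hpI := (Finset.mem_inter.mp hp).1
        have hpJ := (Finset.mem_inter.mp hp).2
        have hqI := (Finset.mem_inter.mp hq).1
        have hqJ := (Finset.mem_inter.mp hq).2
        have hI2 : 2 ≤ I.card := hIJ.trans (Finset.card_le_card Finset.inter_subset_left)
        have hJ2 : 2 ≤ J.card := hIJ.trans (Finset.card_le_card Finset.inter_subset_right)
        rcases (hfL I).mp hI with h | ⟨ℓ, hℓ, hsubI⟩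
        · omega
        rcases (hfL J).mp hJ with h | ⟨m, hm, hsubJ⟩
        · omega
        obtain ⟨u, _, hu⟩ := huniq p q hpq
        have : ℓ = m := by
          rw [hu ℓ ⟨hℓ, hsubI hpI, hsubI hqI⟩, hu m ⟨hm, hsubJ hpJ, hsubJ hqJ⟩]
        refine (hfL _).mpr (Or.inr ⟨ℓ, hℓ, Finset.union_subset hsubI (this ▸ hsubJ)⟩)
    · intro hf
      exact ⟨MaxSets f, (maxsets_isLinSpace hf).1, (maxsets_isLinSpace hf).2⟩
  · intro L L' hL hL' hfL hfL'
    rw [lines_eq_maxsets hL hfL, lines_eq_maxsets hL' hfL']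
end

section
/- The scheme associated to the Möbius–Kantor configuration is Spec ℚ[z]/(z² − z + 1); in particular the polynomial z² − z + 1 has no rational roots but has roots in ℚ(√−3), so the Möbius–Kantor configuration has no strong realization over ℚ (and none over ℝ) but its defining polynomial system has solutions over ℚ(√−3). -/
/-- The determinant of three vectors in `k³`. -/
def det3 {k : Type*} [Field k] (a b c : Fin 3 → k) : k :=
  Matrix.det (Matrix.of ![a, b, c])

/-- The columns of the matrix parametrizing weak realizations of the Möbius–Kantor
configuration with the first five points in standard position. -/
def mkVecs {k : Type*} [Field k] (y1 y2 y3 z1 z2 z3 : k) : Fin 8 → Fin 3 → k :=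
  ![![0, 1, 1], ![0, 0, 1], ![0, 1, 0], ![1, 1, 1], ![1, 0, 0],
    ![1, y1, z1], ![1, y2, z2], ![1, y3, z3]]

/-- The system of determinant equations for the Möbius–Kantor configuration
(lines {1,2,3}, {1,4,5}, {5,6,7}, {1,7,8}, {3,5,8}, {2,6,8}, {3,4,6}, {2,4,7},
shifted to 0-indexing). -/
def mkSystem {k : Type*} [Field k] (y1 y2 y3 z1 z2 z3 : k) : Prop :=
  det3 (mkVecs y1 y2 y3 z1 z2 z3 0) (mkVecs y1 y2 y3 z1 z2 z3 1) (mkVecs y1 y2 y3 z1 z2 z3 2) = 0 ∧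
  det3 (mkVecs y1 y2 y3 z1 z2 z3 0) (mkVecs y1 y2 y3 z1 z2 z3 3) (mkVecs y1 y2 y3 z1 z2 z3 4) = 0 ∧
  det3 (mkVecs y1 y2 y3 z1 z2 z3 4) (mkVecs y1 y2 y3 z1 z2 z3 5) (mkVecs y1 y2 y3 z1 z2 z3 6) = 0 ∧
  det3 (mkVecs y1 y2 y3 z1 z2 z3 0) (mkVecs y1 y2 y3 z1 z2 z3 6) (mkVecs y1 y2 y3 z1 z2 z3 7) = 0 ∧
  det3 (mkVecs y1 y2 y3 z1 z2 z3 2) (mkVecs y1 y2 y3 z1 z2 z3 4) (mkVecs y1 y2 y3 z1 z2 z3 7) = 0 ∧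
  det3 (mkVecs y1 y2 y3 z1 z2 z3 1) (mkVecs y1 y2 y3 z1 z2 z3 5) (mkVecs y1 y2 y3 z1 z2 z3 7) = 0 ∧
  det3 (mkVecs y1 y2 y3 z1 z2 z3 2) (mkVecs y1 y2 y3 z1 z2 z3 3) (mkVecs y1 y2 y3 z1 z2 z3 5) = 0 ∧
  det3 (mkVecs y1 y2 y3 z1 z2 z3 1) (mkVecs y1 y2 y3 z1 z2 z3 3) (mkVecs y1 y2 y3 z1 z2 z3 6) = 0

/-!
Of the eight collinearity conditions, the first two only involve the fixed points, and five of
the others are linear: they force `y2 = z1 = 1`, `y3 = y1`, `z3 = 0` and `y1 = 1 - z2`. The line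
`{5,6,7}` then reads `(1 - z2) * z2 = 1`, i.e. `z2² - z2 + 1 = 0`. Over an ordered ring this has
no solution since `4 (x² - x + 1) = (2x - 1)² + 3`, while `(1 + √-3) / 2` is a root in `ℂ`.
-/

theorem mkSystem_iff {k : Type*} [Field k] (y1 y2 y3 z1 z2 z3 : k) :
    mkSystem y1 y2 y3 z1 z2 z3 ↔
      y2 = 1 ∧ z1 = 1 ∧ y3 = y1 ∧ z3 = 0 ∧ y1 = 1 - z2 ∧ z2 ^ 2 - z2 + 1 = 0 := by
  simp only [mkSystem, det3, mkVecs, Matrix.det_fin_three, Fin.isValue, Matrix.cons_val_zero, Matrix.cons_val_one, Matrix.cons_val,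
    Matrix.of_apply, Matrix.cons_val', Matrix.cons_val_fin_one, mul_zero, mul_one, sub_self,
    add_zero, zero_add, one_mul, zero_mul, sub_zero, zero_sub, neg_eq_zero, true_and]
  constructor
  · rintro ⟨h567, h178, h358, h268, h346, h247⟩
    exact ⟨by linear_combination h247, by linear_combination -h346, by linear_combination h268,
      h358, by linear_combination h178 - h268 + h247 + h358,
      by linear_combination -h567 + z2 * (h178 - h268 + h247 + h358) + y2 * h346 - h247⟩
  · rintro ⟨rfl, rfl, rfl, rfl, rfl, h⟩
    exact ⟨by linear_combination -h, by ring, rfl, by ring, by ring, by ring⟩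

theorem exists_mkSystem_iff {k : Type*} [Field k] :
    (∃ y1 y2 y3 z1 z2 z3 : k, mkSystem y1 y2 y3 z1 z2 z3) ↔ ∃ z : k, z ^ 2 - z + 1 = 0 := by
  simp only [mkSystem_iff]
  constructor
  · rintro ⟨-, -, -, -, z, -, -, -, -, -, -, hz⟩
    exact ⟨z, hz⟩
  · rintro ⟨z, hz⟩
    exact ⟨1 - z, 1, 1 - z, 1, z, 0, rfl, rfl, rfl, rfl, rfl, hz⟩

theorem sq_sub_self_add_one_pos {R : Type*} [CommRing R] [LinearOrder R] [IsStrictOrderedRing R]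
    (x : R) : 0 < x ^ 2 - x + 1 := by
  nlinarith [sq_nonneg (2 * x - 1)]

theorem not_exists_sq_sub_self_add_one_eq_zero {R : Type*} [CommRing R] [LinearOrder R]
    [IsStrictOrderedRing R] : ¬ ∃ x : R, x ^ 2 - x + 1 = 0 :=
  fun ⟨x, hx⟩ ↦ (sq_sub_self_add_one_pos x).ne' hx

theorem half_add_half_sqrt_three_mul_I_sq_sub_self_add_one :
    (1 / 2 + 1 / 2 * (√3 : ℝ) * Complex.I : ℂ) ^ 2 - (1 / 2 + 1 / 2 * (√3 : ℝ) * Complex.I)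
      + 1 = 0 := by
  have h3 : ((√3 : ℝ) : ℂ) ^ 2 = 3 := by
    rw [← Complex.ofReal_pow, Real.sq_sqrt (by norm_num)]
    norm_num
  linear_combination (Complex.I ^ 2 / 4) * h3 + (3 / 4 : ℂ) * Complex.I_sq

/-- The Möbius–Kantor system is solvable over a field `k` iff `z² − z + 1` has a root
in `k`; the polynomial has no root in ℚ or ℝ, but has a root in ℚ(√−3) ⊆ ℂ. -/
theorem mobius_kantor {k : Type*} [Field k] :
    ((∃ y1 y2 y3 z1 z2 z3 : k, mkSystem y1 y2 y3 z1 z2 z3) ↔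
      ∃ z : k, z ^ 2 - z + 1 = 0) ∧
    (¬ ∃ q : ℚ, q ^ 2 - q + 1 = 0) ∧
    (¬ ∃ r : ℝ, r ^ 2 - r + 1 = 0) ∧
    (∃ z : ℂ, z ^ 2 - z + 1 = 0 ∧
      ∃ a b : ℚ, z = (a : ℂ) + (b : ℂ) * (Real.sqrt 3 : ℝ) * Complex.I) :=
  ⟨exists_mkSystem_iff, not_exists_sq_sub_self_add_one_eq_zero,
    not_exists_sq_sub_self_add_one_eq_zero,
    _, half_add_half_sqrt_three_mul_I_sq_sub_self_add_one, 1 / 2, 1 / 2, by push_cast; ring⟩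
end

section
/- Every weak realization of the special Desargues data forces an extra collinearity (Desargues' theorem): if points p1,...,p10 in P²(k) satisfy that the triples (1,2,3), (1,4,5), (1,6,7), (2,4,8), (3,5,8), (2,6,9), (3,7,9), (4,6,10), (5,7,10) are each collinear, and all ten points are distinct with the non-listed triples among {2,...,10} in general position as in the Desargues configuration, then the triple (8,9,10) is also collinear. -/
/-- Three points of the projective plane over `k` are collinear iff the determinant of
homogeneous coordinate representatives vanishes. -/
def Col3 {k : Type*} [Field k] (p q r : Projectivization k (Fin 3 → k)) : Prop :=
  Matrix.det (Matrix.of ![p.rep, q.rep, r.rep]) = 0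

/-- The nine prescribed lines of the Desargues configuration minus the line {8,9,10}
(0-indexed: lines of the configuration on points {0,...,9} other than {7,8,9}). -/
def desarguesLines : Set (Finset (Fin 10)) :=
  {{0, 1, 2}, {0, 3, 4}, {0, 5, 6}, {1, 3, 7}, {2, 4, 7},
   {1, 5, 8}, {2, 6, 8}, {3, 5, 9}, {4, 6, 9}}

/-!
Normalise representatives so that the centre of perspectivity is
`o = α a + α' a' = β b + β' b' = γ c + γ' c'`. Then `α a - β b = β' b' - α' a'` lies on both
lines `ab` and `a'b'`, so it represents their meet `x`; likewise `α a - γ c` represents `y` and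
`β b - γ c` represents `z`, and these three vectors are dependent:
`(α a - β b) - (α a - γ c) + (β b - γ c) = 0`.
-/

open Module Submodule
open scoped LinearAlgebra.Projectivization

theorem exists_smul_eq_of_mem_inf_span_pair {k V : Type*} [Field k] [AddCommGroup V] [Module k V]
    {S : Submodule k V} {a b u w : V} (ha : a ∉ S)
    (hu : u ∈ S ⊓ span k {a, b}) (hu0 : u ≠ 0) (hw : w ∈ S ⊓ span k {a, b}) :
    ∃ t : k, t • u = w := by
  classical
  have : FiniteDimensional k (span k {a, b}) := FiniteDimensional.span_of_finite k (Set.toFinite _)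
  have hlt : S ⊓ span k {a, b} < span k {a, b} :=
    inf_lt_right.2 fun h => ha (h (subset_span (Set.mem_insert a {b})))
  have hle : finrank k (span k {a, b}) ≤ 2 := by
    have := (finrank_span_finset_le_card (R := k) ({a, b} : Finset V)).trans Finset.card_le_two
    rwa [Set.finrank, Finset.coe_pair] at this
  have hpos : 0 < finrank k ↥(S ⊓ span k {a, b}) :=
    finrank_pos_iff_exists_ne_zero.2 ⟨⟨u, hu⟩, by simpa using hu0⟩
  have hone : finrank k ↥(S ⊓ span k {a, b}) = 1 := by
    have := Submodule.finrank_lt_finrank_of_lt hlt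
    omega
  obtain ⟨t, ht⟩ := exists_smul_eq_of_finrank_eq_one hone
    (x := (⟨u, hu⟩ : ↥(S ⊓ span k {a, b}))) (by simpa using hu0) ⟨w, hw⟩
  exact ⟨t, congrArg Subtype.val ht⟩

namespace Projectivization

variable {k V : Type*} [Field k] [AddCommGroup V] [Module k V]

theorem independent_cons_iff {p q r : ℙ k V} :
    Independent ![r, p, q] ↔ p ≠ q ∧ r.rep ∉ span k {p.rep, q.rep} := by
  rw [independent_iff, ← linearIndependent_pair_iff_ne]
  have : Projectivization.rep ∘ ![r, p, q] = Fin.cons r.rep ![p.rep, q.rep] := by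
    ext i; fin_cases i <;> rfl
  rw [this, linearIndependent_finCons]
  simp [Matrix.range_cons, Set.pair_comm]

theorem dependent_cons_iff {p q r : ℙ k V} (hpq : p ≠ q) :
    Dependent ![r, p, q] ↔ r.rep ∈ span k {p.rep, q.rep} := by
  rw [dependent_iff_not_independent, independent_cons_iff]
  simp [hpq]

theorem exists_rep_eq_smul_add_smul {o p q : ℙ k V} (h : Dependent ![o, p, q]) (hpq : p ≠ q)
    (hoq : o ≠ q) : ∃ s t : k, s ≠ 0 ∧ o.rep = s • p.rep + t • q.rep := by
  obtain ⟨s, t, hst⟩ := mem_span_pair.1 ((dependent_cons_iff hpq).1 h)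
  refine ⟨s, t, fun hs => hoq ?_, hst.symm⟩
  have := (LinearIndependent.pair_iff.1 (linearIndependent_pair_iff_ne.2 hoq)) 1 (-t)
    (by rw [← hst, hs]; module)
  exact absurd this.1 one_ne_zero

theorem smul_rep_sub_smul_rep_ne_zero {p q : ℙ k V} (hpq : p ≠ q) {s : k} (hs : s ≠ 0) (t : k) :
    s • p.rep - t • q.rep ≠ 0 := fun h =>
  hs (LinearIndependent.pair_iff.1 (linearIndependent_pair_iff_ne.2 hpq) s (-t)
    (by rw [← h]; module)).1

theorem exists_smul_eq_rep_of_dependent {a b a' b' x : ℙ k V} (ha' : Independent ![a', a, b])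
    (ha'b' : a' ≠ b') (hx : Dependent ![x, a, b]) (hx' : Dependent ![x, a', b']) {u : V}
    (hu : u ∈ span k {a.rep, b.rep}) (hu' : u ∈ span k {a'.rep, b'.rep}) (hu0 : u ≠ 0) :
    ∃ t : k, t • u = x.rep := by
  obtain ⟨hab, ha'_notMem⟩ := independent_cons_iff.1 ha'
  exact exists_smul_eq_of_mem_inf_span_pair ha'_notMem ⟨hu, hu'⟩ hu0
    ⟨(dependent_cons_iff hab).1 hx, (dependent_cons_iff ha'b').1 hx'⟩

theorem dependent_of_smul_eq_rep {x y z : ℙ k V} {u v w : V} (huvw : u - v + w = 0) {s t r : k}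
    (hs : s • u = x.rep) (ht : t • v = y.rep) (hr : r • w = z.rep) : Dependent ![x, y, z] := by
  have inv_smul_rep {p : ℙ k V} {c : k} {e : V} (h : c • e = p.rep) : c⁻¹ • p.rep = e ∧ c⁻¹ ≠ 0 := by
    have hc : c ≠ 0 := by rintro rfl; exact p.rep_nonzero (by rw [← h, zero_smul])
    exact ⟨by rw [← h, smul_smul, inv_mul_cancel₀ hc, one_smul], inv_ne_zero hc⟩
  rw [dependent_iff, Fintype.not_linearIndependent_iff]
  refine ⟨![s⁻¹, -t⁻¹, r⁻¹], ?_, 0, (inv_smul_rep hs).2⟩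
  simp only [Fin.sum_univ_three, Function.comp_apply, Matrix.cons_val_zero, Matrix.cons_val_one,
    Matrix.cons_val_two, Matrix.head_cons, Matrix.tail_cons, neg_smul, (inv_smul_rep hs).1,
    (inv_smul_rep ht).1, (inv_smul_rep hr).1]
  rw [← huvw]
  abel

theorem dependent_of_perspective {o a a' b b' c c' x y z : ℙ k V}
    (ho_a : Dependent ![o, a, a']) (ho_b : Dependent ![o, b, b']) (ho_c : Dependent ![o, c, c'])
    (hoa' : o ≠ a') (hob' : o ≠ b') (hcc' : c ≠ c')
    (ha'_ab : Independent ![a', a, b]) (ha'_ac : Independent ![a', a, c])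
    (hb'_bc : Independent ![b', b, c]) (ha'b' : a' ≠ b') (ha'c' : a' ≠ c') (hb'c' : b' ≠ c')
    (hx : Dependent ![x, a, b]) (hx' : Dependent ![x, a', b'])
    (hy : Dependent ![y, a, c]) (hy' : Dependent ![y, a', c'])
    (hz : Dependent ![z, b, c]) (hz' : Dependent ![z, b', c']) :
    Dependent ![x, y, z] := by
  obtain ⟨hab, -⟩ := independent_cons_iff.1 ha'_ab
  obtain ⟨hac, -⟩ := independent_cons_iff.1 ha'_ac
  obtain ⟨hbc, -⟩ := independent_cons_iff.1 hb'_bc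
  have haa' : a ≠ a' := fun h => (independent_cons_iff.1 ha'_ab).2 (h ▸ subset_span (by simp))
  have hbb' : b ≠ b' := fun h => (independent_cons_iff.1 hb'_bc).2 (h ▸ subset_span (by simp))
  obtain ⟨α, α', hα, hoα⟩ := exists_rep_eq_smul_add_smul ho_a haa' hoa'
  obtain ⟨β, β', hβ, hoβ⟩ := exists_rep_eq_smul_add_smul ho_b hbb' hob'
  obtain ⟨γ, γ', hoγ⟩ := mem_span_pair.1 ((dependent_cons_iff hcc').1 ho_c)
  obtain ⟨s, hs⟩ := exists_smul_eq_rep_of_dependent ha'_ab ha'b' hx hx'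
    (mem_span_pair.2 ⟨α, -β, by module⟩)
    (mem_span_pair.2 ⟨-α', β', by linear_combination (norm := module) hoα - hoβ⟩)
    (smul_rep_sub_smul_rep_ne_zero hab hα β)
  obtain ⟨t, ht⟩ := exists_smul_eq_rep_of_dependent ha'_ac ha'c' hy hy'
    (mem_span_pair.2 ⟨α, -γ, by module⟩)
    (mem_span_pair.2 ⟨-α', γ', by linear_combination (norm := module) hoα - hoγ.symm⟩)
    (smul_rep_sub_smul_rep_ne_zero hac hα γ)
  obtain ⟨r, hr⟩ := exists_smul_eq_rep_of_dependent hb'_bc hb'c' hz hz'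
    (mem_span_pair.2 ⟨β, -γ, by module⟩)
    (mem_span_pair.2 ⟨-β', γ', by linear_combination (norm := module) hoβ - hoγ.symm⟩)
    (smul_rep_sub_smul_rep_ne_zero hbc hβ γ)
  exact dependent_of_smul_eq_rep (by abel) hs ht hr

end Projectivization

open Projectivization

theorem col3_iff_dependent {k : Type*} [Field k] (p q r : ℙ k (Fin 3 → k)) :
    Col3 p q r ↔ Dependent ![p, q, r] := by
  have hrows : (Matrix.of ![p.rep, q.rep, r.rep]).row = Projectivization.rep ∘ ![p, q, r] := by
    ext i : 1
    fin_cases i <;> rfl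
  rw [Col3, dependent_iff, ← not_iff_not, not_not, ← ne_eq, ← isUnit_iff_ne_zero,
    ← Matrix.isUnit_iff_isUnit_det, ← Matrix.linearIndependent_rows_iff_isUnit, hrows]

/-- Desargues' theorem: ten distinct points realizing the Desargues configuration minus
one line, in general position (collinearities are exactly the nine prescribed ones,
apart from the possible triple {8,9,10}), satisfy the tenth collinearity (8,9,10). -/
theorem desargues_forced_collinearity {k : Type*} [Field k]
    (p : Fin 10 → Projectivization k (Fin 3 → k))
    (hinj : Function.Injective p)
    (hstrong : ∀ a b c : Fin 10, a ≠ b → a ≠ c → b ≠ c →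
      ({a, b, c} : Finset (Fin 10)) ≠ {7, 8, 9} →
      (Col3 (p a) (p b) (p c) ↔ ∃ ℓ ∈ desarguesLines, ({a, b, c} : Finset (Fin 10)) ⊆ ℓ)) :
    Col3 (p 7) (p 8) (p 9) := by
  have line {a b c : Fin 10} (hab : a ≠ b) (hac : a ≠ c) (hbc : b ≠ c)
      (h : ({a, b, c} : Finset (Fin 10)) ≠ {7, 8, 9}) :
      Dependent ![p a, p b, p c] ↔ ∃ ℓ ∈ desarguesLines, ({a, b, c} : Finset (Fin 10)) ⊆ ℓ :=
    (col3_iff_dependent _ _ _).symm.trans (hstrong a b c hab hac hbc h)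
  rw [col3_iff_dependent]
  refine dependent_of_perspective (o := p 0) (a := p 1) (a' := p 2) (b := p 3) (b' := p 4)
    (c := p 5) (c' := p 6) ?_ ?_ ?_ ?_ ?_ ?_ ?_ ?_ ?_ ?_ ?_ ?_ ?_ ?_ ?_ ?_ ?_ ?_
  all_goals first
    | exact hinj.ne (by decide)
    | refine (line ?_ ?_ ?_ ?_).2 ?_
    | refine independent_iff_not_dependent.2 ((line ?_ ?_ ?_ ?_).not.2 ?_)
  all_goals first
    | decide
    | simp only [desarguesLines, Set.mem_insert_iff, Set.mem_singleton_iff, exists_eq_or_imp,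
        exists_eq_left]; decide
end
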